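/- arXiv:1910.11023 — 11 statements merged into one kernel-verified Lean document; each statement's English description precedes it below -/
import Mathlib

section
/- If A is a retract of an integral domain B (i.e., there is a ring homomorphism π: B → A with π restricting to the identity on A), then A is algebraically closed in B. -/
/-!
For `b` algebraic over `A`, the difference `b - π b` is algebraic and lies in the kernel of `π`.
A nonzero algebraic element of a domain divides a nonzero element `r` of the base, and applying
`π` turns this into `0 ∣ r`; hence `b = π b ∈ A`.
-/

open Polynomial
open scoped nonZeroDivisors

theorem IsAlgebraic.sub_algebraMap {R S : Type*} [CommRing R] [CommRing S] [Algebra R S]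
    {s : S} (hs : IsAlgebraic R s) (r : R) : IsAlgebraic R (s - algebraMap R S r) := by
  obtain ⟨p, hp, hps⟩ := hs
  refine ⟨p.comp (X + C r), comp_X_add_C_ne_zero_iff.mpr hp, ?_⟩
  simpa [aeval_comp] using hps

theorem IsAlgebraic.notMem_nonZeroDivisors_of_retraction_eq_zero {R S : Type*} [CommRing R]
    [Ring S] [Algebra R S] (π : S →ₐ[R] R) {s : S} (hs : IsAlgebraic R s) (hπs : π s = 0) :
    s ∉ S⁰ := by
  intro hs₀
  obtain ⟨r, hr, hsr⟩ := hs.exists_nonzero_dvd hs₀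
  have hr_dvd : π s ∣ r := by simpa only [AlgHom.commutes, Algebra.algebraMap_self,
    RingHom.id_apply] using map_dvd π hsr
  rw [hπs, zero_dvd_iff] at hr_dvd
  exact hr hr_dvd

theorem IsAlgebraic.eq_algebraMap_retraction {R S : Type*} [CommRing R] [CommRing S]
    [IsDomain S] [Algebra R S] (π : S →ₐ[R] R) {s : S} (hs : IsAlgebraic R s) :
    s = algebraMap R S (π s) := by
  have hπ : π (s - algebraMap R S (π s)) = 0 := by
    rw [map_sub, AlgHom.commutes, Algebra.algebraMap_self, RingHom.id_apply, sub_self]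
  by_contra hne
  exact (hs.sub_algebraMap (π s)).notMem_nonZeroDivisors_of_retraction_eq_zero π hπ
    (mem_nonZeroDivisors_of_ne_zero (sub_ne_zero.mpr hne))

/-- If `A` is a retract of an integral domain `B`, then `A` is algebraically
closed in `B`: every element of `B` algebraic over `A` lies in `A`. -/
theorem retract_algebraically_closed {B : Type*} [CommRing B] [IsDomain B]
    (A : Subring B) (π : B →+* A) (hπ : ∀ a : A, π (a : B) = a) :
    ∀ b : B, (∃ p : Polynomial A, p ≠ 0 ∧ Polynomial.aeval b p = 0) → b ∈ A := by
  intro b hb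
  let πA : B →ₐ[A] A := { π with commutes' := hπ }
  rw [IsAlgebraic.eq_algebraMap_retraction πA hb]
  exact (π b).2
end

section
/- If A is a retract of a unique factorization domain B, then A is a unique factorization domain. -/
/-! Let `ι : A → B` be the inclusion and `π : B → A` the retraction. Every element of a UFD is
primal, and primality descends to `A`: if `ι a ∣ ι b * ι c` splits as `ι a = x * y` with
`x ∣ ι b`, `y ∣ ι c`, then applying `π` splits `a = π x * π y` with `π x ∣ b`, `π y ∣ c`.
Cancellativity and well-founded strict divisibility pull back along `ι`, which is injective and
reflects units since it has a left inverse. A cancellative, well-founded decomposition monoid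
is a UFD. -/

section

open Function

variable {α β F G : Type*}

theorem DecompositionMonoid.of_leftInverse [Semigroup α] [Semigroup β] [DecompositionMonoid β]
    [FunLike F α β] [MulHomClass F α β] [FunLike G β α] [MulHomClass G β α]
    (f : F) (g : G) (hfg : LeftInverse g f) : DecompositionMonoid α where
  primal a b c h := by
    obtain ⟨x, y, hx, hy, hxy⟩ := exists_dvd_and_dvd_of_dvd_mul (map_mul f b c ▸ map_dvd f h)
    refine ⟨g x, g y, hfg b ▸ map_dvd g hx, hfg c ▸ map_dvd g hy, ?_⟩
    rw [← map_mul, ← hxy, hfg a]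

theorem WfDvdMonoid.of_injective [CommMonoidWithZero α] [CommMonoidWithZero β] [WfDvdMonoid β]
    [FunLike F α β] [MonoidWithZeroHomClass F α β] (f : F) [IsLocalHom f] (hf : Injective f) :
    WfDvdMonoid α where
  wf := by
    refine Subrelation.wf ?_ (InvImage.wf f wellFounded_dvdNotUnit)
    rintro a b ⟨ha, x, hx, rfl⟩
    exact ⟨(map_ne_zero_iff f hf).mpr ha, f x, (isUnit_map_iff f x).not.mpr hx, map_mul f a x⟩

theorem UniqueFactorizationMonoid.of_leftInverse [CommMonoidWithZero α] [CommMonoidWithZero β]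
    [UniqueFactorizationMonoid β] [FunLike F α β] [MonoidWithZeroHomClass F α β]
    [FunLike G β α] [MonoidHomClass G β α] (f : F) (g : G) (hfg : LeftInverse g f) :
    UniqueFactorizationMonoid α :=
  have := hfg.injective.isCancelMulZero f (map_zero f) (map_mul f)
  have := DecompositionMonoid.of_leftInverse f g hfg
  have := isLocalHom_of_leftInverse g hfg
  have := WfDvdMonoid.of_injective f hfg.injective
  ufm_of_decomposition_of_wfDvdMonoid

end

theorem retract_ufd_general {B : Type*} [CommRing B]
    [UniqueFactorizationMonoid B]
    (A : Subring B) (π : B →+* B) (hidem : ∀ b, π (π b) = π b)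
    (hrange : π.range = A) :
    UniqueFactorizationMonoid A := by
  have hmem (b : B) : π b ∈ A := hrange ▸ π.mem_range_self b
  have hfix (a : A) : π a = a := by
    obtain ⟨b, hb⟩ : (a : B) ∈ π.range := hrange ▸ a.2
    rw [← hb, hidem]
  exact .of_leftInverse A.subtype (π.codRestrict A hmem) fun a => Subtype.ext (hfix a)

/-- If `A` is a retract of a UFD `B`, then `A` is a UFD. -/
theorem retract_ufd {B : Type*} [CommRing B] [IsDomain B]
    [UniqueFactorizationMonoid B]
    (A : Subring B) (π : B →+* B) (hidem : ∀ b, π (π b) = π b)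
    (hrange : π.range = A) :
    UniqueFactorizationMonoid A :=
  retract_ufd_general A π hidem hrange
end

section
/- Let R be a ring, B an R-algebra and A an R-algebra retract of B. If B is a faithfully flat R-algebra, then A is a faithfully flat R-algebra. -/
/-!
Flatness passes to retracts. For faithfulness, `Spec B → Spec R` factors through `Spec A`
via `ι`, so `Spec A → Spec R` is surjective because `Spec B → Spec R` is.
-/

lemma PrimeSpectrum.comap_surjective_of_algHom_of_faithfullyFlat {R A B : Type*} [CommRing R]
    [CommRing A] [CommRing B] [Algebra R A] [Algebra R B] [Module.FaithfullyFlat R B]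
    (ι : A →ₐ[R] B) : Function.Surjective (comap (algebraMap R A)) := by
  have hfactor : comap (algebraMap R B) = comap (algebraMap R A) ∘ comap (ι : A →+* B) := by
    rw [← ι.comp_algebraMap]
    rfl
  exact Function.Surjective.of_comp (hfactor ▸ comap_surjective_of_faithfullyFlat)

lemma Module.FaithfullyFlat.of_flat_of_algHom {R A B : Type*} [CommRing R] [CommRing A]
    [CommRing B] [Algebra R A] [Algebra R B] [Module.Flat R A] [Module.FaithfullyFlat R B]
    (ι : A →ₐ[R] B) : Module.FaithfullyFlat R A :=
  of_comap_surjective (PrimeSpectrum.comap_surjective_of_algHom_of_faithfullyFlat ι)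

/-- If `B` is a faithfully flat `R`-algebra and `A` is an `R`-algebra retract
of `B`, then `A` is a faithfully flat `R`-algebra. -/
theorem retract_faithfullyFlat {R A B : Type*} [CommRing R] [CommRing A] [CommRing B]
    [Algebra R A] [Algebra R B] [Module.FaithfullyFlat R B]
    (ι : A →ₐ[R] B) (π : B →ₐ[R] A) (hπ : π.comp ι = AlgHom.id R A) :
    Module.FaithfullyFlat R A := by
  have : Module.Flat R A :=
    Module.Flat.of_retract ι.toLinearMap π.toLinearMap (by
      rw [← AlgHom.comp_toLinearMap, hπ, AlgHom.toLinearMap_id])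
  exact Module.FaithfullyFlat.of_flat_of_algHom ι
end

section
/- Let C be an integral domain and x, y nonzero elements of C. Then y is a regular element on C/xC (i.e., a non-zerodivisor on the quotient) if and only if C = C_x ∩ C_y, the intersection taken inside the field of fractions of C. -/
/-!
If `y` is regular modulo `x` then so is every power `yᵐ`, and, `x` being a non-zerodivisor,
`yᵐ` is even regular modulo every power `xⁿ`. An element `a / xⁿ = b / yᵐ` of `C_x ∩ C_y` gives
`a yᵐ = b xⁿ`, so `xⁿ ∣ a` and the element lies in `C`. Conversely, if `y c = x d` then
`c / x = d / y` lies in `C_x ∩ C_y = C`, which says `x ∣ c`.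
-/

theorem dvd_of_dvd_pow_mul {R : Type*} [Monoid R] {x y : R}
    (hreg : ∀ c, x ∣ y * c → x ∣ c) (m : ℕ) {c : R} (h : x ∣ y ^ m * c) : x ∣ c := by
  induction m generalizing c with
  | zero => simpa using h
  | succ m ih => exact hreg c (ih (by rwa [pow_succ, mul_assoc] at h))

theorem pow_dvd_of_pow_dvd_mul {R : Type*} [CommMonoidWithZero R] [IsLeftCancelMulZero R] {x y : R}
    (hx : x ≠ 0) (hreg : ∀ c, x ∣ y * c → x ∣ c) (n : ℕ) {c : R} (h : x ^ n ∣ y * c) : x ^ n ∣ c := by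
  induction n generalizing c with
  | zero => simp
  | succ n ih =>
    obtain ⟨c', rfl⟩ := hreg c (dvd_trans (dvd_pow_self x n.succ_ne_zero) h)
    rw [pow_succ', mul_left_comm, mul_dvd_mul_iff_left hx] at h
    rw [pow_succ', mul_dvd_mul_iff_left hx]
    exact ih h

section FractionRing

variable {C K : Type*} [CommRing C] [Field K] [Algebra C K] [IsFractionRing C K]

theorem algebraMap_div_pow_eq_iff {x y : C} (hx : x ≠ 0) (hy : y ≠ 0) {a b : C} {n m : ℕ} :
    algebraMap C K a / algebraMap C K x ^ n = algebraMap C K b / algebraMap C K y ^ m ↔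
      a * y ^ m = b * x ^ n := by
  rw [div_eq_div_iff (pow_ne_zero _ (IsFractionRing.to_map_eq_zero_iff.not.2 hx))
    (pow_ne_zero _ (IsFractionRing.to_map_eq_zero_iff.not.2 hy)), ← map_pow, ← map_pow,
    ← map_mul, ← map_mul, (IsFractionRing.injective C K).eq_iff]

theorem mem_range_algebraMap_of_div_pow_eq [IsDomain C] {x y : C} (hx : x ≠ 0) (hy : y ≠ 0)
    (hreg : ∀ c, x ∣ y * c → x ∣ c) {a b : C} {n m : ℕ}
    (h : algebraMap C K a / algebraMap C K x ^ n = algebraMap C K b / algebraMap C K y ^ m) :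
    algebraMap C K a / algebraMap C K x ^ n ∈ Set.range (algebraMap C K) := by
  have hdvd : x ^ n ∣ y ^ m * a :=
    ⟨b, by rw [mul_comm, (algebraMap_div_pow_eq_iff hx hy).1 h, mul_comm]⟩
  obtain ⟨e, rfl⟩ := pow_dvd_of_pow_dvd_mul hx (fun _ ↦ dvd_of_dvd_pow_mul hreg m) n hdvd
  refine ⟨e, ?_⟩
  rw [map_mul, map_pow, mul_div_cancel_left₀]
  exact pow_ne_zero _ (IsFractionRing.to_map_eq_zero_iff.not.2 hx)

theorem dvd_of_algebraMap_div_mem_range {x c : C} (hx : x ≠ 0)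
    (h : algebraMap C K c / algebraMap C K x ∈ Set.range (algebraMap C K)) : x ∣ c := by
  obtain ⟨e, he⟩ := h
  rw [eq_div_iff (IsFractionRing.to_map_eq_zero_iff.not.2 hx), ← map_mul,
    (IsFractionRing.injective C K).eq_iff] at he
  exact ⟨e, by rw [← he, mul_comm]⟩

end FractionRing

/-- Let `C` be a domain and `x, y` nonzero.  Then `y` is `(C/xC)`-regular iff
`C = C_x ∩ C_y` inside the fraction field of `C`, where `C_x` consists of the
fractions `c / xⁿ`. -/
theorem regular_iff_intersection {C : Type*} [CommRing C] [IsDomain C]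
    (x y : C) (hx : x ≠ 0) (hy : y ≠ 0) :
    (∀ c : C, y * c ∈ Ideal.span {x} → c ∈ Ideal.span {x}) ↔
      Set.range (algebraMap C (FractionRing C)) =
        {z : FractionRing C | ∃ (c : C) (n : ℕ),
            z = algebraMap C (FractionRing C) c / (algebraMap C (FractionRing C) x) ^ n} ∩
        {z : FractionRing C | ∃ (c : C) (n : ℕ),
            z = algebraMap C (FractionRing C) c / (algebraMap C (FractionRing C) y) ^ n} := by
  simp only [Ideal.mem_span_singleton]
  constructor
  · intro hreg
    refine subset_antisymm ?_ ?_
    · rintro _ ⟨c, rfl⟩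
      exact ⟨⟨c, 0, by simp⟩, ⟨c, 0, by simp⟩⟩
    · rintro _ ⟨⟨a, n, rfl⟩, ⟨b, m, h⟩⟩
      exact mem_range_algebraMap_of_div_pow_eq hx hy hreg h
  · rintro hEq c ⟨d, hd⟩
    have hquot : algebraMap C (FractionRing C) c / algebraMap C (FractionRing C) x ^ 1 =
        algebraMap C (FractionRing C) d / algebraMap C (FractionRing C) y ^ 1 :=
      (algebraMap_div_pow_eq_iff hx hy).2 (by rw [pow_one, pow_one, mul_comm, hd, mul_comm])
    refine dvd_of_algebraMap_div_mem_range (K := FractionRing C) hx ?_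
    rw [← pow_one (algebraMap C (FractionRing C) x), hEq]
    exact ⟨⟨c, 1, rfl⟩, ⟨d, 1, hquot⟩⟩
end

section
/- Let R be an integral domain, A a flat R-algebra which is an integral domain containing R, and r, x nonzero elements of R. Let I = rR_x ∩ R (intersection inside the fraction field of R). Then IA = rA_x ∩ A (intersection inside the fraction field of A). -/
/-!
`I` is the directed union of the colon ideals `(r) : xⁿ`, and `Ideal.map` commutes with such
unions. Flat base change also commutes with each colon ideal `(q) : p`: by the equational criterion
for flatness, a relation `a · p = q · b` in `A` is an `A`-combination of relations
`c · p = q · d` in `R`, which puts `a` in `((q) : p) A`.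
-/

namespace Ideal

theorem map_colon_singleton_le {R S : Type*} [CommRing R] [CommRing S] (f : R →+* S)
    (I : Ideal R) (p : R) : (I.colon {p}).map f ≤ (I.map f).colon {f p} := by
  rw [map_le_iff_le_comap]
  intro s hs
  rw [mem_comap, Submodule.mem_colon_singleton, smul_eq_mul, ← map_mul]
  exact mem_map_of_mem f (Submodule.mem_colon_singleton.mp hs)

theorem map_span_singleton_colon_singleton_of_flat {R A : Type*} [CommRing R] [CommRing A]
    [Algebra R A] [Module.Flat R A] (p q : R) :
    ((span {q}).colon {p}).map (algebraMap R A) =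
      (span {algebraMap R A q}).colon {algebraMap R A p} := by
  refine le_antisymm (by simpa only [map_span, Set.image_singleton] using
    map_colon_singleton_le (algebraMap R A) (span {q}) p) fun a ha => ?_
  obtain ⟨b, hb⟩ := mem_span_singleton'.mp (Submodule.mem_colon_singleton.mp ha)
  obtain ⟨k, c, y, hy, hc⟩ := Module.Flat.isTrivialRelation_of_sum_smul_eq_zero
    (f := ![p, -q]) (x := ![a, b]) (by
      rw [smul_eq_mul] at hb
      simp [Fin.sum_univ_two, Algebra.smul_def, ← hb, mul_comm])
  have hc_mem (j : Fin k) : c 0 j ∈ (span {q}).colon {p} := by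
    have hj : p * c 0 j - q * c 1 j = 0 := by simpa [Fin.sum_univ_two, sub_eq_add_neg] using hc j
    rw [Submodule.mem_colon_singleton, smul_eq_mul, mul_comm, sub_eq_zero.mp hj]
    exact mul_mem_right _ _ (mem_span_singleton_self q)
  rw [show a = ∑ j, c 0 j • y j from hy 0]
  refine sum_mem _ fun j _ => ?_
  rw [Algebra.smul_def]
  exact mul_mem_right _ _ (mem_map_of_mem _ (hc_mem j))

theorem mem_iSup_span_singleton_colon_pow {R : Type*} [CommRing R] (r x s : R) :
    s ∈ ⨆ n : ℕ, (span {r}).colon {x ^ n} ↔ ∃ (n : ℕ) (c : R), s * x ^ n = r * c := by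
  have hmono : Monotone fun n : ℕ => (span {r}).colon {x ^ n} := fun n m hnm t ht => by
    rw [Submodule.mem_colon_singleton, smul_eq_mul] at ht ⊢
    rw [← Nat.add_sub_cancel' hnm, pow_add, ← mul_assoc]
    exact mul_mem_right _ _ ht
  simp only [Submodule.mem_iSup_of_directed _ hmono.directed_le, Submodule.mem_colon_singleton,
    smul_eq_mul, mem_span_singleton', mul_comm r, eq_comm]

end Ideal

theorem flat_extension_of_intersection_ideal_general {R A : Type*} [CommRing R]
    [CommRing A] [Algebra R A]
    [Module.Flat R A]
    (r x : R)
    (I : Ideal R) (hI : ∀ s : R, s ∈ I ↔ ∃ (n : ℕ) (c : R), s * x ^ n = r * c) :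
    ∀ a : A, a ∈ Ideal.map (algebraMap R A) I ↔
      ∃ (n : ℕ) (b : A), a * (algebraMap R A x) ^ n = algebraMap R A r * b := by
  have hI' : I = ⨆ n : ℕ, (Ideal.span {r}).colon {x ^ n} := by
    ext s
    rw [hI, Ideal.mem_iSup_span_singleton_colon_pow]
  intro a
  rw [hI', Ideal.map_iSup]
  simp only [Ideal.map_span_singleton_colon_singleton_of_flat, map_pow,
    Ideal.mem_iSup_span_singleton_colon_pow]

/-- Let `R` be a domain, `A` a flat `R`-algebra which is a domain containing
`R`, `r, x` nonzero elements of `R` and `I = rR_x ∩ R`.  Then `IA = rA_x ∩ A`,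
i.e. `a ∈ IA` iff `a · xⁿ ∈ rA` for some `n`. -/
theorem flat_extension_of_intersection_ideal {R A : Type*} [CommRing R] [IsDomain R]
    [CommRing A] [IsDomain A] [Algebra R A]
    (hinj : Function.Injective (algebraMap R A)) [Module.Flat R A]
    (r x : R) (hr : r ≠ 0) (hx : x ≠ 0)
    (I : Ideal R) (hI : ∀ s : R, s ∈ I ↔ ∃ (n : ℕ) (c : R), s * x ^ n = r * c) :
    ∀ a : A, a ∈ Ideal.map (algebraMap R A) I ↔
      ∃ (n : ℕ) (b : A), a * (algebraMap R A x) ^ n = algebraMap R A r * b :=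
  flat_extension_of_intersection_ideal_general r x I hI
end

section
/- Let R be an integral domain, r, x nonzero elements of R, and I = rR_x ∩ R (intersection inside the fraction field). If I is an invertible ideal of R, then Iⁿ = rⁿR_x ∩ R for every n ≥ 0. -/
/-!
If `t` lies in `I⁻¹` and `s ∈ rⁿ⁺¹R_x ∩ R`, then `tr` and `ts` lie in `R`, and
`(ts)·xᵐ = (tr)·rⁿ·c` shows `ts ∈ rⁿR_x ∩ R`. Hence `I⁻¹s ⊆ rⁿR_x ∩ R`, and multiplying by `I`
gives `rⁿ⁺¹R_x ∩ R ⊆ I·(rⁿR_x ∩ R)`; the reverse inclusion is elementary, so induction on `n`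
finishes.
-/

open nonZeroDivisors

namespace Ideal

variable {R K : Type*} [CommRing R]

theorem mem_mul_of_forall_inv_mul_mem [IsDomain R] [Field K] [Algebra R K] [IsFractionRing R K]
    {I J : Ideal R} (hI : IsUnit (I : FractionalIdeal R⁰ K)) {s : R}
    (h : ∀ t ∈ (I : FractionalIdeal R⁰ K)⁻¹, t * algebraMap R K s ∈ (J : FractionalIdeal R⁰ K)) :
    s ∈ I * J := by
  have hinv_mul : (I : FractionalIdeal R⁰ K)⁻¹ * FractionalIdeal.spanSingleton R⁰ (algebraMap R K s)
      ≤ J := by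
    refine FractionalIdeal.mul_le.2 fun t ht y hy => ?_
    obtain ⟨d, rfl⟩ := (FractionalIdeal.mem_spanSingleton R⁰).1 hy
    rw [mul_smul_comm]
    exact Submodule.smul_mem _ d (h t ht)
  have hspan : ((span {s} : Ideal R) : FractionalIdeal R⁰ K) ≤ ↑(I * J) :=
    calc ((span {s} : Ideal R) : FractionalIdeal R⁰ K)
        = I * ((I : FractionalIdeal R⁰ K)⁻¹ * FractionalIdeal.spanSingleton R⁰ (algebraMap R K s)) := by
          rw [← mul_assoc, (FractionalIdeal.mul_inv_cancel_iff_isUnit K).2 hI, one_mul,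
            FractionalIdeal.coeIdeal_span_singleton]
      _ ≤ I * J := mul_le_mul_right hinv_mul _
      _ = ↑(I * J) := (FractionalIdeal.coeIdeal_mul I J).symm
  exact span_singleton_le_iff_mem _ |>.1 <| (FractionalIdeal.coeIdeal_le_coeIdeal K).1 hspan

/-- The ideal `rⁿR_x ∩ R`. -/
def saturatedPow (r x : R) (n : ℕ) : Ideal R where
  carrier := {s | ∃ (m : ℕ) (c : R), s * x ^ m = r ^ n * c}
  zero_mem' := ⟨0, 0, by simp⟩
  add_mem' := by
    rintro a b ⟨m₁, c₁, h₁⟩ ⟨m₂, c₂, h₂⟩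
    exact ⟨m₁ + m₂, c₁ * x ^ m₂ + c₂ * x ^ m₁, by
      rw [pow_add]; linear_combination x ^ m₂ * h₁ + x ^ m₁ * h₂⟩
  smul_mem' := by
    rintro a b ⟨m, c, h⟩
    exact ⟨m, a * c, by rw [smul_eq_mul]; linear_combination a * h⟩

variable {r x : R}

theorem mem_saturatedPow {n : ℕ} {s : R} :
    s ∈ saturatedPow r x n ↔ ∃ (m : ℕ) (c : R), s * x ^ m = r ^ n * c :=
  Iff.rfl

theorem saturatedPow_zero : saturatedPow r x 0 = ⊤ :=
  eq_top_iff.2 fun s _ => ⟨0, s, by ring⟩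

theorem saturatedPow_antitone : Antitone (saturatedPow r x) := by
  rintro a b hab s ⟨m, c, h⟩
  exact ⟨m, r ^ (b - a) * c, by rw [h, ← mul_assoc, pow_mul_pow_sub r hab]⟩

theorem saturatedPow_mul_le (a b : ℕ) :
    saturatedPow r x a * saturatedPow r x b ≤ saturatedPow r x (a + b) := by
  refine mul_le.2 fun s ⟨m₁, c₁, h₁⟩ t ⟨m₂, c₂, h₂⟩ => ⟨m₁ + m₂, c₁ * c₂, ?_⟩
  rw [pow_add, pow_add]
  linear_combination (t * x ^ m₂) * h₁ + r ^ a * c₁ * h₂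

theorem saturatedPow_one_pow_le (n : ℕ) : saturatedPow r x 1 ^ n ≤ saturatedPow r x n := by
  induction n with
  | zero => simp [saturatedPow_zero]
  | succ n ih =>
    calc saturatedPow r x 1 ^ (n + 1) = saturatedPow r x 1 ^ n * saturatedPow r x 1 := pow_succ _ _
      _ ≤ saturatedPow r x n * saturatedPow r x 1 := mul_le_mul_left ih _
      _ ≤ saturatedPow r x (n + 1) := saturatedPow_mul_le n 1

section Invertible

variable (K) [IsDomain R] [Field K] [Algebra R K] [IsFractionRing R K]

theorem saturatedPow_succ_le_mul (hI : IsUnit (saturatedPow r x 1 : FractionalIdeal R⁰ K))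
    (n : ℕ) : saturatedPow r x (n + 1) ≤ saturatedPow r x 1 * saturatedPow r x n := by
  intro s hs
  refine mem_mul_of_forall_inv_mul_mem hI fun t ht => ?_
  have hintegral : ∀ y ∈ saturatedPow r x 1, ∃ a : R, algebraMap R K a = t * algebraMap R K y :=
    fun y hy => (FractionalIdeal.mem_one_iff R⁰).1 <|
      (FractionalIdeal.mem_inv_iff hI.ne_zero).1 ht _ (FractionalIdeal.mem_coeIdeal_of_mem R⁰ hy)
  obtain ⟨a, ha⟩ := hintegral r ⟨0, 1, by ring⟩
  obtain ⟨b, hb⟩ := hintegral s (saturatedPow_antitone (by omega) hs)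
  obtain ⟨m, c, h⟩ := hs
  rw [← hb]
  refine FractionalIdeal.mem_coeIdeal_of_mem R⁰ ⟨m, a * c, IsFractionRing.injective R K ?_⟩
  have h' := congrArg (algebraMap R K) h
  simp only [map_mul, map_pow] at h' ⊢
  rw [hb, ha]
  linear_combination t * h'

theorem saturatedPow_one_pow (hI : IsUnit (saturatedPow r x 1 : FractionalIdeal R⁰ K)) (n : ℕ) :
    saturatedPow r x 1 ^ n = saturatedPow r x n := by
  induction n with
  | zero => rw [pow_zero, saturatedPow_zero, one_eq_top]
  | succ n ih =>
    refine le_antisymm (saturatedPow_one_pow_le _) ?_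
    rw [pow_succ', ih]
    exact saturatedPow_succ_le_mul K hI n

end Invertible

end Ideal

theorem invertible_ideal_powers_general {R : Type*} [CommRing R] [IsDomain R]
    (r x : R)
    (I : Ideal R) (hI : ∀ s : R, s ∈ I ↔ ∃ (m : ℕ) (c : R), s * x ^ m = r * c)
    (hinv : ∃ u : (FractionalIdeal (nonZeroDivisors R) (FractionRing R))ˣ,
        (u : FractionalIdeal (nonZeroDivisors R) (FractionRing R)) = I) :
    ∀ n : ℕ, ∀ s : R, s ∈ I ^ n ↔ ∃ (m : ℕ) (c : R), s * x ^ m = r ^ n * c := by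
  obtain rfl : I = Ideal.saturatedPow r x 1 :=
    Ideal.ext fun s => by rw [hI, Ideal.mem_saturatedPow, pow_one]
  intro n s
  rw [Ideal.saturatedPow_one_pow (FractionRing R) hinv n, Ideal.mem_saturatedPow]

/-- Let `R` be a domain, `r, x` nonzero, and `I = rR_x ∩ R`.  If `I` is an
invertible ideal of `R`, then `Iⁿ = rⁿR_x ∩ R` for every `n ≥ 0`. -/
theorem invertible_ideal_powers {R : Type*} [CommRing R] [IsDomain R]
    (r x : R) (hr : r ≠ 0) (hx : x ≠ 0)
    (I : Ideal R) (hI : ∀ s : R, s ∈ I ↔ ∃ (m : ℕ) (c : R), s * x ^ m = r * c)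
    (hinv : ∃ u : (FractionalIdeal (nonZeroDivisors R) (FractionRing R))ˣ,
        (u : FractionalIdeal (nonZeroDivisors R) (FractionRing R)) = I) :
    ∀ n : ℕ, ∀ s : R, s ∈ I ^ n ↔ ∃ (m : ℕ) (c : R), s * x ^ m = r ^ n * c :=
  invertible_ideal_powers_general r x I hI hinv
end

section
/- Let B be an integral domain and φ a nontrivial exponential map on B with ring of invariants A = B^φ. Then A is factorially closed in B: for all nonzero a, b ∈ B, if ab ∈ A then a ∈ A and b ∈ A. -/
/-- `φ : B → B[U]` is an exponential map if evaluation at `U = 0` is the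
identity and `φ_V φ_U = φ_{V+U}` (coassociativity). -/
def IsExponentialMap {B : Type*} [CommRing B] (φ : B →+* Polynomial B) : Prop :=
  (∀ b : B, Polynomial.eval 0 (φ b) = b) ∧
  (∀ b : B, Polynomial.map φ (φ b) =
      Polynomial.eval₂ (Polynomial.C.comp Polynomial.C)
        (Polynomial.C Polynomial.X + Polynomial.X) (φ b))

/-! Since `φ` is multiplicative, `φ a` divides `φ (a * c) = C (a * c)`; over a domain a divisor
of a nonzero constant is a constant, and the constant is `a` because `φ` reduces to the
identity at `U = 0`. -/

open Polynomial

namespace IsExponentialMap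

variable {B : Type*} [CommRing B] {φ : B →+* B[X]}

theorem map_eq_C_of_natDegree_eq_zero (hφ : IsExponentialMap φ) {b : B}
    (h : (φ b).natDegree = 0) : φ b = C b := by
  rw [eq_C_of_natDegree_eq_zero h, coeff_zero_eq_eval_zero, hφ.1]

theorem map_eq_C_of_map_mul_eq_C [NoZeroDivisors B] (hφ : IsExponentialMap φ) {a c : B}
    (hac : a * c ≠ 0) (h : φ (a * c) = C (a * c)) : φ a = C a := by
  have hdvd : φ a ∣ C (a * c) := ⟨φ c, by rw [← h, map_mul]⟩
  exact hφ.map_eq_C_of_natDegree_eq_zero <| Nat.le_zero.1 <|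
    (natDegree_le_of_dvd hdvd (C_ne_zero.2 hac)).trans_eq (natDegree_C _)

end IsExponentialMap

theorem exponential_invariants_factorially_closed_general {B : Type*} [CommRing B] [IsDomain B]
    (φ : B →+* Polynomial B) (hφ : IsExponentialMap φ) :
    ∀ a b : B, a ≠ 0 → b ≠ 0 → φ (a * b) = Polynomial.C (a * b) →
      φ a = Polynomial.C a ∧ φ b = Polynomial.C b := by
  intro a b ha hb hab
  have hba : φ (b * a) = C (b * a) := mul_comm a b ▸ hab
  exact ⟨hφ.map_eq_C_of_map_mul_eq_C (mul_ne_zero ha hb) hab,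
    hφ.map_eq_C_of_map_mul_eq_C (mul_ne_zero hb ha) hba⟩

/-- The ring of invariants of a nontrivial exponential map on a domain `B` is
factorially closed in `B`. -/
theorem exponential_invariants_factorially_closed {B : Type*} [CommRing B] [IsDomain B]
    (φ : B →+* Polynomial B) (hφ : IsExponentialMap φ)
    (hnt : φ ≠ (Polynomial.C : B →+* Polynomial B)) :
    ∀ a b : B, a ≠ 0 → b ≠ 0 → φ (a * b) = Polynomial.C (a * b) →
      φ a = Polynomial.C a ∧ φ b = Polynomial.C b :=
  exponential_invariants_factorially_closed_general φ hφ
end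

section
/- Let A be a subring of a domain B with a retraction π: B → A. Suppose there is a prime element p ∈ A such that: (i) p is prime in B; (ii) B[1/p] = A[1/p][x'] is a polynomial ring in one variable over A[1/p]; (iii) ∩_{n≥0} pⁿB = (0). Then B = A[x] is a polynomial ring in one variable over A. -/
/-!
Clearing denominators and subtracting `π` turns the given variable of `B[1/p]` over `A[1/p]` into
an element of `ker π` that is still such a variable. Dividing by `p` preserves both properties, so
since `⋂ pⁿB = 0` some such `x` is not divisible by `p`. The map `A[X] → B`, `X ↦ x`, is injective
because it is so after inverting `p`, and every `b` has some `pᵐ b` in its image. Finally `A[x]` is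
`p`-saturated in `B`: if `p ∣ G(x)`, reading off the constant term with `π` and using that `p` is
prime with `p ∤ x` shows inductively that every coefficient of `G` is divisible by `p` in `A`.
-/

open Polynomial

theorem Polynomial.bijective_eval₂RingHom_mul_add_iff {R S : Type*} [CommRing R] [CommRing S]
    (φ : R →+* S) (F : S) {a : R} (ha : IsUnit a) (b : R) :
    Function.Bijective (eval₂RingHom φ (φ a * F + φ b)) ↔
      Function.Bijective (eval₂RingHom φ F) := by
  let _ := ha.invertible
  have h : (eval₂RingHom φ (φ a * F + φ b) : R[X] → S) =
      eval₂RingHom φ F ∘ algEquivCMulXAddC a b := by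
    funext g
    simp [← comp_eq_aeval, eval₂_comp]
  rw [h, Function.Bijective.of_comp_iff _ (algEquivCMulXAddC a b).bijective]

section Retraction

variable {B : Type*} [CommRing B] {A : Subring B}

theorem retraction_eval₂_subtype_eq_coeff_zero (π : B →+* A) (hπ : ∀ a : A, π (a : B) = a)
    {x : B} (hx : π x = 0) (G : A[X]) : π (G.eval₂ A.subtype x) = G.coeff 0 := by
  rw [hom_eval₂, hx, eval₂_at_zero]
  exact hπ _

theorem C_dvd_of_dvd_eval₂_subtype (π : B →+* A) (hπ : ∀ a : A, π (a : B) = a) {p : A}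
    (hp : Prime (p : B)) {x : B} (hx : π x = 0) (hpx : ¬ (p : B) ∣ x) {G : A[X]}
    (hG : (p : B) ∣ G.eval₂ A.subtype x) : C p ∣ G := by
  have coeff_zero : ∀ G : A[X], (p : B) ∣ G.eval₂ A.subtype x → p ∣ G.coeff 0 := by
    rintro G ⟨c, hc⟩
    refine ⟨π c, ?_⟩
    rw [← retraction_eval₂_subtype_eq_coeff_zero π hπ hx, hc, map_mul, hπ]
  rw [C_dvd_iff_dvd_coeff]
  intro n
  induction n generalizing G with
  | zero => exact coeff_zero G hG
  | succ n ih =>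
    rw [← coeff_divX]
    refine ih ((hp.dvd_or_dvd ?_).resolve_left hpx)
    have hsplit := congrArg (eval₂ A.subtype x) (X_mul_divX_add G)
    rw [eval₂_add, eval₂_mul, eval₂_X, eval₂_C] at hsplit
    refine (dvd_add_left (map_dvd A.subtype (coeff_zero G hG))).mp ?_
    rwa [hsplit]

variable [IsDomain B]

theorem mem_range_eval₂_subtype_of_mul_mem (π : B →+* A) (hπ : ∀ a : A, π (a : B) = a)
    {p : A} (hp : Prime (p : B)) {x : B} (hx : π x = 0) (hpx : ¬ (p : B) ∣ x) {b : B}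
    (hb : (p : B) * b ∈ (eval₂RingHom A.subtype x).range) :
    b ∈ (eval₂RingHom A.subtype x).range := by
  obtain ⟨G, hG⟩ := hb
  obtain ⟨H, rfl⟩ := C_dvd_of_dvd_eval₂_subtype π hπ hp hx hpx ⟨b, hG⟩
  refine ⟨H, mul_left_cancel₀ hp.ne_zero ?_⟩
  simpa [eval₂_mul] using hG

theorem mem_range_eval₂_subtype_of_pow_mul_mem (π : B →+* A)
    (hπ : ∀ a : A, π (a : B) = a) {p : A} (hp : Prime (p : B)) {x : B} (hx : π x = 0)
    (hpx : ¬ (p : B) ∣ x) (m : ℕ) {b : B}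
    (hb : (p : B) ^ m * b ∈ (eval₂RingHom A.subtype x).range) :
    b ∈ (eval₂RingHom A.subtype x).range := by
  induction m generalizing b with
  | zero => simpa using hb
  | succ m ih =>
    rw [pow_succ, mul_assoc] at hb
    exact mem_range_eval₂_subtype_of_mul_mem π hπ hp hx hpx (ih hb)

end Retraction

section Localization

variable {B : Type*} [CommRing B] {A : Subring B} {p : A}
  {LA LB : Type*} [CommRing LA] [CommRing LB] [Algebra A LA] [Algebra B LB]
  [IsLocalization (Submonoid.powers p) LA] [IsLocalization (Submonoid.powers (p : B)) LB]
  (hle : Submonoid.powers p ≤ (Submonoid.powers (p : B)).comap A.subtype)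

theorem algebraMap_eval₂_subtype (x : B) (G : A[X]) :
    algebraMap B LB (G.eval₂ A.subtype x) =
      (G.map (algebraMap A LA)).eval₂ (IsLocalization.map LB A.subtype hle)
        (algebraMap B LB x) := by
  rw [hom_eval₂, eval₂_map, IsLocalization.map_comp]

theorem injective_eval₂_subtype [IsDomain B] (hp : p ≠ 0) {x : B}
    (hx : Function.Injective
      (eval₂RingHom (IsLocalization.map LB A.subtype hle : LA →+* LB) (algebraMap B LB x))) :
    Function.Injective (eval₂RingHom A.subtype x) := by
  intro G H h
  refine map_injective _ (IsLocalization.injective LA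
    (powers_le_nonZeroDivisors_of_noZeroDivisors hp)) (hx ?_)
  simpa [← algebraMap_eval₂_subtype hle] using congrArg (algebraMap B LB) h

theorem exists_pow_mul_mem_range_eval₂_subtype [IsDomain B] (hp : (p : B) ≠ 0) {x : B}
    (hx : Function.Surjective
      (eval₂RingHom (IsLocalization.map LB A.subtype hle : LA →+* LB) (algebraMap B LB x)))
    (b : B) : ∃ m : ℕ, (p : B) ^ m * b ∈ (eval₂RingHom A.subtype x).range := by
  obtain ⟨g, hg⟩ := hx (algebraMap B LB b)
  obtain ⟨_, ⟨m, rfl⟩, hs⟩ := IsLocalization.integerNormalization_spec (Submonoid.powers p) g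
  refine ⟨m, IsLocalization.integerNormalization (Submonoid.powers p) g,
    IsLocalization.injective LB (powers_le_nonZeroDivisors_of_noZeroDivisors hp) ?_⟩
  rw [coe_eval₂RingHom, algebraMap_eval₂_subtype (LA := LA) hle, hs,
    ← IsScalarTower.algebraMap_smul LA, eval₂_smul, ← coe_eval₂RingHom, hg]
  simp [IsLocalization.map_eq]

theorem bijective_eval₂_of_bijective_mul {z : B}
    (h : Function.Bijective (eval₂RingHom (IsLocalization.map LB A.subtype hle : LA →+* LB)
      (algebraMap B LB (p * z)))) :
    Function.Bijective
      (eval₂RingHom (IsLocalization.map LB A.subtype hle : LA →+* LB) (algebraMap B LB z)) := by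
  have hu : IsUnit (algebraMap A LA p) :=
    IsLocalization.map_units LA ⟨p, Submonoid.mem_powers p⟩
  rw [← bijective_eval₂RingHom_mul_add_iff _ _ hu 0]
  simpa [IsLocalization.map_eq] using h

theorem exists_retraction_eq_zero_bijective (π : B →+* A) (hπ : ∀ a : A, π (a : B) = a)
    {F : LB} (hF : Function.Bijective
      (eval₂RingHom (IsLocalization.map LB A.subtype hle : LA →+* LB) F)) :
    ∃ x : B, π x = 0 ∧ Function.Bijective
      (eval₂RingHom (IsLocalization.map LB A.subtype hle : LA →+* LB) (algebraMap B LB x)) := by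
  obtain ⟨⟨b, _, k, rfl⟩, hb⟩ := IsLocalization.surj (Submonoid.powers (p : B)) F
  refine ⟨b - π b, by simp [hπ], ?_⟩
  have hu : IsUnit (algebraMap A LA (p ^ k)) :=
    IsLocalization.map_units LA ⟨p ^ k, pow_mem (Submonoid.mem_powers p) k⟩
  rw [← bijective_eval₂RingHom_mul_add_iff _ _ hu (algebraMap A LA (-π b))] at hF
  convert hF using 2
  simp [IsLocalization.map_eq, ← hb, mul_comm, sub_eq_add_neg]

theorem exists_retraction_eq_zero_bijective_not_dvd [IsDomain B] (π : B →+* A)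
    (hπ : ∀ a : A, π (a : B) = a) (hp : Prime (p : B))
    (hint : ∀ b : B, (∀ n : ℕ, b ∈ Ideal.span {(p : B) ^ n}) → b = 0) {x₀ : B} (hx₀ : π x₀ = 0)
    (hbij : Function.Bijective
      (eval₂RingHom (IsLocalization.map LB A.subtype hle : LA →+* LB) (algebraMap B LB x₀))) :
    ∃ x : B, π x = 0 ∧ Function.Bijective
      (eval₂RingHom (IsLocalization.map LB A.subtype hle : LA →+* LB) (algebraMap B LB x)) ∧
        ¬ (p : B) ∣ x := by
  by_contra! hdvd
  have hpA : p ≠ 0 := ne_zero_of_map (f := A.subtype) hp.ne_zero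
  have descent : ∀ n : ℕ, ∃ z : B, π z = 0 ∧ Function.Bijective
      (eval₂RingHom (IsLocalization.map LB A.subtype hle : LA →+* LB) (algebraMap B LB z)) ∧
        x₀ = (p : B) ^ n * z := by
    intro n
    induction n with
    | zero => exact ⟨x₀, hx₀, hbij, by simp⟩
    | succ n ih =>
      obtain ⟨z, hz, hzbij, hx₀z⟩ := ih
      obtain ⟨w, rfl⟩ := hdvd z hz hzbij
      refine ⟨w, ?_, bijective_eval₂_of_bijective_mul hle hzbij, by rw [hx₀z]; ring⟩
      rw [map_mul, hπ] at hz
      exact (mul_eq_zero.mp hz).resolve_left hpA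
  have hx₀_zero : x₀ = 0 := hint x₀ fun n ↦ by
    obtain ⟨z, -, -, hz⟩ := descent n
    exact Ideal.mem_span_singleton.mpr ⟨z, hz⟩
  refine X_ne_zero (injective_eval₂_subtype hle hpA hbij.1 ?_)
  simp [hx₀_zero]

end Localization

theorem retract_polynomial_criterion_general {B : Type*} [CommRing B] [IsDomain B]
    (A : Subring B) (π : B →+* A) (hπ : ∀ a : A, π (a : B) = a)
    (p : A) (hpB : Prime (p : B))
    (hle : Submonoid.powers p ≤
      Submonoid.comap (A.subtype : A →* B) (Submonoid.powers ((p : B))))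
    (hloc : ∃ F : Localization (Submonoid.powers ((p : B))),
      Function.Bijective
        (Polynomial.eval₂RingHom
          (IsLocalization.map (Localization (Submonoid.powers ((p : B))))
            (A.subtype : A →+* B) hle :
            Localization (Submonoid.powers p) →+*
              Localization (Submonoid.powers ((p : B)))) F))
    (hint : ∀ b : B, (∀ n : ℕ, b ∈ Ideal.span {(p : B) ^ n}) → b = 0) :
    ∃ x : B, Function.Bijective (Polynomial.eval₂RingHom (A.subtype : A →+* B) x) := by
  obtain ⟨F, hF⟩ := hloc
  obtain ⟨x₀, hx₀, hx₀bij⟩ := exists_retraction_eq_zero_bijective hle π hπ hF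
  obtain ⟨x, hx, hxbij, hpx⟩ :=
    exists_retraction_eq_zero_bijective_not_dvd hle π hπ hpB hint hx₀ hx₀bij
  refine ⟨x, injective_eval₂_subtype hle (ne_zero_of_map (f := A.subtype) hpB.ne_zero) hxbij.1,
    fun b ↦ ?_⟩
  obtain ⟨m, hm⟩ := exists_pow_mul_mem_range_eval₂_subtype hle hpB.ne_zero hxbij.2 b
  exact mem_range_eval₂_subtype_of_pow_mul_mem π hπ hpB hx hpx m hm

/-- Russell–Sathaye-type criterion: if `A` is a retract of a domain `B`,
`p ∈ A` is prime in both `A` and `B`, `B[1/p]` is a polynomial ring in one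
variable over `A[1/p]`, and `⋂ₙ pⁿB = (0)`, then `B` is a polynomial ring in
one variable over `A`. -/
theorem retract_polynomial_criterion {B : Type*} [CommRing B] [IsDomain B]
    (A : Subring B) (π : B →+* A) (hπ : ∀ a : A, π (a : B) = a)
    (p : A) (hpA : Prime p) (hpB : Prime (p : B))
    (hle : Submonoid.powers p ≤
      Submonoid.comap (A.subtype : A →* B) (Submonoid.powers ((p : B))))
    (hloc : ∃ F : Localization (Submonoid.powers ((p : B))),
      Function.Bijective
        (Polynomial.eval₂RingHom
          (IsLocalization.map (Localization (Submonoid.powers ((p : B))))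
            (A.subtype : A →+* B) hle :
            Localization (Submonoid.powers p) →+*
              Localization (Submonoid.powers ((p : B)))) F))
    (hint : ∀ b : B, (∀ n : ℕ, b ∈ Ideal.span {(p : B) ^ n}) → b = 0) :
    ∃ x : B, Function.Bijective (Polynomial.eval₂RingHom (A.subtype : A →+* B) x) :=
  retract_polynomial_criterion_general A π hπ p hpB hle hloc hint
end

section
/- Let B be a UFD and A a subring of B such that A is a retract of B and A = B^φ for some nontrivial exponential map φ on B. Then B is a polynomial ring in one variable over A. -/
/-!
Write `A` for the invariant ring of `φ` and `deg b` for `(φ b).natDegree`. Leading coefficients of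
the `φ b` lie in `A`, so the coefficient of `U ^ m` is an `A`-linear map from `{b | deg b ≤ m}`
to `A`, injective for `m = 0` and with kernel `{b | deg b < m}` otherwise. Hence that module has
rank at most `m + 1`, and counting monomials shows that no two elements of `B` are algebraically
independent over `A`.

Let `p` be a prime element of the prime ideal `ker π`. For `x ∈ ker π`, `p` is algebraic over
`A[x]`, so `p ∣ R(x)` for some nonzero `R ∈ A[X]`; cancelling a power of `x` and applying `π`,
which kills `p` and `x`, gives `p ∣ x`. So `ker π = (p)`, and writing `y = π y + p z` with
`deg z < deg y` shows `B = A[p]`; `p` is transcendental over `A` because `deg p > 0`.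
-/

open Polynomial

section Retraction

variable {B : Type*} [CommRing B] {A : Subring B} {π : B →+* A}

theorem dvd_of_dvd_aeval_of_retraction (hπ : ∀ a : A, π a = a) {p x : B} (hp : Prime p)
    (hpπ : π p = 0) (hxπ : π x = 0) {R : A[X]} (hR : R ≠ 0) (hdvd : p ∣ aeval x R) : p ∣ x := by
  obtain ⟨Q, hRQ, hQ⟩ := exists_eq_pow_rootMultiplicity_mul_and_not_dvd R hR 0
  rw [C_0, sub_zero, X_dvd_iff] at hQ
  rw [hRQ, C_0, sub_zero, map_mul, map_pow, aeval_X] at hdvd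
  by_contra hpx
  obtain ⟨c, hc⟩ := (hp.dvd_or_dvd hdvd).resolve_left fun h => hpx (hp.dvd_of_dvd_pow h)
  have hπQ : π (aeval x Q) = Q.coeff 0 := by
    rw [aeval_def, hom_eval₂, hxπ, show π.comp (algebraMap A B) = RingHom.id A from
      RingHom.ext hπ, eval₂_at_zero, RingHom.id_apply]
  exact hQ (by rw [← hπQ, hc, map_mul, hpπ, zero_mul])

theorem eq_zero_of_retraction_eq_zero (hπ : ∀ a : A, π a = a) {a : B} (ha : a ∈ A)
    (h : π a = 0) : a = 0 := by
  simpa [hπ ⟨a, ha⟩] using congrArg Subtype.val h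

theorem retraction_sub_self (hπ : ∀ a : A, π a = a) (b : B) : π (b - π b) = 0 := by
  rw [map_sub, hπ, sub_self]

end Retraction

def degreeFiltration {B : Type*} [CommRing B] (φ : B →+* B[X]) (m : ℕ) :
    Submodule (φ.eqLocus C) B where
  carrier := {b | (φ b).natDegree ≤ m}
  add_mem' {b c} hb hc := by
    simp only [Set.mem_ofPred_eq, map_add] at *
    exact (natDegree_add_le _ _).trans (max_le hb hc)
  zero_mem' := by simp
  smul_mem' a b hb := by
    simp only [Set.mem_ofPred_eq, Subring.smul_def, smul_eq_mul, map_mul,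
      RingHom.mem_eqLocus.mp a.2] at *
    exact (natDegree_C_mul_le _ _).trans hb

namespace IsExponentialMap

variable {B : Type*} [CommRing B] {φ : B →+* B[X]} (hφ : IsExponentialMap φ)
include hφ

theorem injective : Function.Injective φ :=
  Function.LeftInverse.injective hφ.1

theorem natDegree_eq_zero_iff {b : B} : (φ b).natDegree = 0 ↔ b ∈ φ.eqLocus C := by
  refine ⟨fun h => ?_, fun h => by rw [RingHom.mem_eqLocus.mp h, natDegree_C]⟩
  rw [RingHom.mem_eqLocus, eq_C_of_natDegree_eq_zero h, coeff_zero_eq_eval_zero, hφ.1]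

theorem map_ne_zero {b : B} (hb : b ≠ 0) : φ b ≠ 0 :=
  (map_ne_zero_iff φ hφ.injective).mpr hb

variable [IsDomain B]

theorem leadingCoeff_mem (b : B) : (φ b).leadingCoeff ∈ φ.eqLocus C := by
  have hs : (C X + X : B[X][X]).Monic ∧ (C X + X : B[X][X]).natDegree = 1 := by
    rw [add_comm]; exact ⟨monic_X_add_C _, natDegree_X_add_C _⟩
  -- the coefficients of `U ^ deg b` in `φ_V (φ_U b) = φ_{V+U} b` are `φ (lc b)` and `lc b`
  have h := congrArg (coeff · (φ b).natDegree) (hφ.2 b)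
  simp only [coeff_map, coeff_natDegree, ← eval₂_map] at h
  rw [RingHom.mem_eqLocus, h, ← comp, ← natDegree_map_eq_of_injective C_injective,
    ← mul_one (natDegree (map C _)), ← hs.2, ← natDegree_comp, coeff_natDegree,
    leadingCoeff_comp (by rw [hs.2]; exact one_ne_zero),
    hs.1.leadingCoeff, one_pow, mul_one, leadingCoeff_map_of_injective C_injective]

theorem coeff_mem {b : B} {m : ℕ} (hb : (φ b).natDegree ≤ m) : (φ b).coeff m ∈ φ.eqLocus C := by
  rcases hb.eq_or_lt with h | h
  · rw [← h]; exact hφ.leadingCoeff_mem b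
  · rw [coeff_eq_zero_of_natDegree_lt h]; exact zero_mem _

noncomputable def topCoeff (m : ℕ) : degreeFiltration φ m →ₗ[φ.eqLocus C] φ.eqLocus C where
  toFun b := ⟨(φ b).coeff m, hφ.coeff_mem b.2⟩
  map_add' b c := by ext; simp
  map_smul' a b := by ext; simp [Subring.smul_def, RingHom.mem_eqLocus.mp a.2]

theorem topCoeff_zero_injective : Function.Injective (hφ.topCoeff 0) := by
  intro b c h
  have := congrArg Subtype.val h
  simp only [topCoeff, LinearMap.coe_mk, AddHom.coe_mk, coeff_zero_eq_eval_zero, hφ.1] at this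
  exact Subtype.ext this

theorem rank_degreeFiltration_le (m : ℕ) :
    Module.rank (φ.eqLocus C) (degreeFiltration φ m) ≤ m + 1 := by
  have hrank : ∀ m, Module.rank (φ.eqLocus C) (degreeFiltration φ m) ≤
      1 + Module.rank (φ.eqLocus C) (LinearMap.ker (hφ.topCoeff m)) := by
    intro m
    rw [← LinearMap.rank_range_add_rank_ker (hφ.topCoeff m), ← Module.rank_self (φ.eqLocus C)]
    gcongr
    exact Submodule.rank_le _
  induction m with
  | zero =>
    have h0 := hrank 0
    rw [LinearMap.ker_eq_bot.mpr hφ.topCoeff_zero_injective, rank_bot, add_zero] at h0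
    simpa using h0
  | succ m ih =>
    have hker : ∀ b : LinearMap.ker (hφ.topCoeff (m + 1)), (b : B) ∈ degreeFiltration φ m :=
      fun b => natDegree_le_pred (n := m + 1) b.1.2 (congrArg Subtype.val b.2)
    have := LinearMap.rank_le_of_injective
      (((degreeFiltration φ (m + 1)).subtype ∘ₗ (LinearMap.ker _).subtype).codRestrict _ hker)
      fun b c h => by ext; exact congrArg (fun x : degreeFiltration φ m => (x : B)) h
    calc _ ≤ _ := hrank (m + 1)
      _ ≤ 1 + (m + 1) := by gcongr; exact this.trans ih
      _ = ↑(m + 1) + 1 := by push_cast; ring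

theorem card_le_of_linearIndependent {ι : Type*} [Fintype ι] {v : ι → B}
    (hv : LinearIndependent (φ.eqLocus C) v) {m : ℕ} (hdeg : ∀ i, (φ (v i)).natDegree ≤ m) :
    Fintype.card ι ≤ m + 1 := by
  have hw : LinearIndependent (φ.eqLocus C) (fun i => (⟨v i, hdeg i⟩ : degreeFiltration φ m)) :=
    LinearIndependent.of_comp (degreeFiltration φ m).subtype hv
  have := hw.cardinal_lift_le_rank.trans (Cardinal.lift_le.mpr (hφ.rank_degreeFiltration_le m))
  have hcard : ((Fintype.card ι : ℕ) : Cardinal) ≤ ((m + 1 : ℕ) : Cardinal) := by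
    simpa using this
  exact_mod_cast hcard

theorem subsingleton_of_algebraicIndependent {ι : Type*} {v : ι → B}
    (hv : AlgebraicIndependent (φ.eqLocus C) v) : Subsingleton ι := by
  classical
  refine ⟨fun i j => by_contra fun hij => ?_⟩
  set s := (φ (v i)).natDegree + (φ (v j)).natDegree
  let e : Fin (s + 2) × Fin (s + 2) → (ι →₀ ℕ) := fun k =>
    Finsupp.single i (k.1 : ℕ) + Finsupp.single j (k.2 : ℕ)
  have he : Function.Injective e := by
    intro k l h
    have hi := DFunLike.congr_fun h i
    have hj := DFunLike.congr_fun h j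
    simp only [e, Finsupp.coe_add, Pi.add_apply, Finsupp.single_eq_same,
      Finsupp.single_eq_of_ne hij, Finsupp.single_eq_of_ne (Ne.symm hij), add_zero,
      zero_add] at hi hj
    exact Prod.ext (Fin.ext hi) (Fin.ext hj)
  have hmon := ((MvPolynomial.basisMonomials ι (φ.eqLocus C)).linearIndependent.comp e he).map'
    (MvPolynomial.aeval v).toLinearMap (LinearMap.ker_eq_bot.mpr hv)
  have := hφ.card_le_of_linearIndependent hmon (m := (s + 1) * s) (fun k => by
    have hne : ∀ l, φ (v l) ≠ 0 := fun l => hφ.map_ne_zero (hv.ne_zero l)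
    simp only [Function.comp_apply, e, MvPolynomial.coe_basisMonomials, AlgHom.toLinearMap_apply,
      MvPolynomial.aeval_monomial, map_one, one_mul, Finsupp.prod_add_index', pow_zero, pow_add,
      Finsupp.prod_single_index, implies_true, map_mul, map_pow]
    rw [natDegree_mul (pow_ne_zero _ (hne i)) (pow_ne_zero _ (hne j)), natDegree_pow, natDegree_pow]
    have h1 := Nat.mul_le_mul_right (φ (v i)).natDegree (Nat.le_of_lt_succ k.1.is_lt)
    have h2 := Nat.mul_le_mul_right (φ (v j)).natDegree (Nat.le_of_lt_succ k.2.is_lt)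
    exact (add_le_add h1 h2).trans_eq (mul_add _ _ _).symm)
  simp only [Fintype.card_prod, Fintype.card_fin] at this
  nlinarith

theorem transcendental_of_not_mem {b : B} (hb : b ∉ φ.eqLocus C) :
    Transcendental (φ.eqLocus C) b := by
  rw [transcendental_iff_injective, injective_iff_map_eq_zero]
  intro F hF
  have hφA : φ.comp (algebraMap (φ.eqLocus C) B) = C.comp (algebraMap (φ.eqLocus C) B) :=
    RingHom.ext fun a => a.2
  have h : (F.map (algebraMap _ B)).comp (φ b) = 0 := by
    rw [comp, eval₂_map, ← hφA, ← hom_eval₂, ← aeval_def, hF, map_zero]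
  rcases comp_eq_zero_iff.mp h with h | ⟨-, h⟩
  · exact map_injective _ Subtype.val_injective (h.trans (Polynomial.map_zero _).symm)
  · exact absurd (hφ.natDegree_eq_zero_iff.mp (h ▸ natDegree_C _)) hb

theorem exists_ne_zero_dvd_aeval {x p : B} (hx : x ∉ φ.eqLocus C) (hp : p ≠ 0) :
    ∃ R : (φ.eqLocus C)[X], R ≠ 0 ∧ p ∣ aeval x R := by
  have hdep : ¬ AlgebraicIndependent (φ.eqLocus C) (fun o : Option Unit => o.elim p fun _ => x) :=
    fun h => Option.some_ne_none () ((hφ.subsingleton_of_algebraicIndependent h).elim _ _)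
  rw [AlgebraicIndependent.option_iff, Set.range_const,
    algebraicIndependent_unique_type_iff] at hdep
  have halg : IsAlgebraic (Algebra.adjoin (φ.eqLocus C) {x}) p :=
    not_not.mp (not_and.mp hdep (hφ.transcendental_of_not_mem hx))
  obtain ⟨c, hc, hc0⟩ := Submodule.exists_mem_ne_zero_of_ne_bot
    (Ideal.comap_ne_bot_of_algebraic_mem hp (Ideal.mem_span_singleton_self p) halg)
  have hcR : (c : B) ∈ (aeval (R := φ.eqLocus C) x).range := by
    rw [← Algebra.adjoin_singleton_eq_range_aeval]; exact c.2
  obtain ⟨R, hR : aeval x R = c⟩ := hcR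
  refine ⟨R, ?_, ?_⟩
  · rintro rfl
    exact hc0 (Subtype.ext (by simpa using hR.symm))
  · rw [hR]; exact Ideal.mem_span_singleton.mp hc

theorem dvd_of_retraction_eq_zero {π : B →+* φ.eqLocus C} (hπ : ∀ a : φ.eqLocus C, π a = a)
    {p x : B} (hp : Prime p) (hpπ : π p = 0) (hxπ : π x = 0) : p ∣ x := by
  rcases eq_or_ne x 0 with rfl | hx0
  · exact dvd_zero p
  have hx : x ∉ φ.eqLocus C := fun hx => hx0 (eq_zero_of_retraction_eq_zero hπ hx hxπ)
  obtain ⟨R, hR, hdvd⟩ := hφ.exists_ne_zero_dvd_aeval hx hp.ne_zero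
  exact dvd_of_dvd_aeval_of_retraction hπ hp hpπ hxπ hR hdvd

theorem aeval_surjective (π : B →+* φ.eqLocus C) {p : B} (hp : p ∉ φ.eqLocus C)
    (hdvd : ∀ y, p ∣ y - π y) : Function.Surjective (aeval (R := φ.eqLocus C) p) := by
  intro y
  induction hn : (φ y).natDegree using Nat.strong_induction_on generalizing y with
  | _ n ih =>
  obtain ⟨z, hz⟩ := hdvd y
  rcases eq_or_ne z 0 with rfl | hz0
  · exact ⟨C (π y), by rw [aeval_C]; exact (sub_eq_zero.mp (hz.trans (mul_zero p))).symm⟩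
  have hdeg : (φ z).natDegree < n := by
    have h := congrArg (fun b => (φ b).natDegree) hz
    simp only [map_sub, RingHom.mem_eqLocus.mp (π y).2, natDegree_sub_C, map_mul] at h
    have hp0 : p ≠ 0 := fun h => hp (h ▸ zero_mem _)
    rw [natDegree_mul (hφ.map_ne_zero hp0) (hφ.map_ne_zero hz0)] at h
    have := mt hφ.natDegree_eq_zero_iff.mp hp
    omega
  obtain ⟨F, hF⟩ := ih _ hdeg z rfl
  exact ⟨C (π y) + X * F, by
    simp only [map_add, map_mul, aeval_C, aeval_X, hF, Algebra.algebraMap_ofSubsemiring_apply]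
    linear_combination -hz⟩

end IsExponentialMap

/-- Let `B` be a UFD and `A` a subring of `B` which is a retract of `B` and is
the ring of invariants of a nontrivial exponential map on `B`.  Then `B` is a
polynomial ring in one variable over `A`. -/
theorem ufd_retract_exponential_polynomial {B : Type*} [CommRing B] [IsDomain B]
    [UniqueFactorizationMonoid B]
    (A : Subring B) (π : B →+* A) (hπ : ∀ a : A, π (a : B) = a)
    (φ : B →+* Polynomial B) (hφ : IsExponentialMap φ)
    (hnt : φ ≠ (Polynomial.C : B →+* Polynomial B))
    (hinv : ∀ b : B, φ b = Polynomial.C b ↔ b ∈ A) :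
    ∃ x : B, Function.Bijective (Polynomial.eval₂RingHom (A.subtype : A →+* B) x) := by
  obtain rfl : A = φ.eqLocus C := SetLike.ext fun b => (hinv b).symm
  obtain ⟨b, hb⟩ : ∃ b, b ∉ φ.eqLocus C := by
    by_contra! h
    exact hnt (RingHom.ext h)
  have hker : RingHom.ker π ≠ ⊥ := by
    refine (Submodule.ne_bot_iff _).mpr ⟨b - π b, retraction_sub_self hπ b, ?_⟩
    exact sub_ne_zero.mpr fun h => hb (h ▸ (π b).2)
  obtain ⟨p, hpπ, hp⟩ := (RingHom.ker_isPrime π).exists_mem_prime_of_ne_bot hker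
  have hpA : p ∉ φ.eqLocus C := fun h => hp.ne_zero (eq_zero_of_retraction_eq_zero hπ h hpπ)
  refine ⟨p, transcendental_iff_injective.mp (hφ.transcendental_of_not_mem hpA),
    hφ.aeval_surjective π hpA fun y => hφ.dvd_of_retraction_eq_zero hπ hp hpπ
      (retraction_sub_self hπ y)⟩
end

section
/- Let B be a UFD containing ℚ and A a subring of B. Then A is a retract of B and A = Ker D for some nonzero locally nilpotent derivation D of B if and only if B = A[T] is a polynomial ring in one variable over A. -/
/-!
For `B = A[x]`, the retraction is evaluation at `0` and the derivation is `d/dx`.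

Conversely, let `π` be the retraction and `D` the derivation. Leibniz' rule makes
`b ↦ max {n | Dⁿ b ≠ 0}` additive on products, so `A = ker D` is factorially closed.
Among the `s` with `π s = 0` and `0 ≠ D s ∈ A` choose one with `D s` minimal for
divisibility: then no prime factor `q` of `D s` divides `s`, since `s = q u` would make `u`
such an element with `D u = D s / q`. Because `π (P s) = P 0`, the map `A[X] → B`,
`P ↦ P s`, stays injective modulo `q` (and modulo `0`), i.e. `q ∣ P s` forces `q ∣ P`.
Over `ℚ`, Taylor expansion in `s` gives `(D s)ᵐ b ∈ A[s]` for every `b`, and the prime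
factors of `D s` can then be cancelled one at a time, so `b ∈ A[s]`.
-/

open Polynomial Finset

namespace Derivation

variable {B : Type*} [CommRing B] (D : Derivation ℤ B B)

def IsLocallyNilpotent : Prop := ∀ b, ∃ n, D^[n] b = 0

theorem iterate_map_mul (n : ℕ) (a b : B) :
    D^[n] (a * b) = ∑ ij ∈ antidiagonal n, n.choose ij.1 • (D^[ij.1] a * D^[ij.2] b) := by
  induction n with
  | zero => simp
  | succ n ih =>
    rw [sum_antidiagonal_choose_succ_nsmul (M := B) (fun i j => D^[i] a * D^[j] b) n]
    simp only [Function.iterate_succ_apply', ih, map_sum, map_nsmul, leibniz, smul_eq_mul,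
      smul_add, sum_add_distrib]
    congr 1
    refine sum_congr rfl fun ⟨i, j⟩ hij => ?_
    rw [n.choose_symm_of_eq_add (mem_antidiagonal.1 hij).symm, mul_comm]

theorem iterate_map_mul_of_map_eq_zero {a : B} (ha : D a = 0) (n : ℕ) (b : B) :
    D^[n] (a * b) = a * D^[n] b := by
  induction n with
  | zero => rfl
  | succ n ih => simp [Function.iterate_succ_apply', ih, ha]

theorem iterate_map_pow_self {s : B} (hs : D (D s) = 0) (n : ℕ) :
    D^[n] (s ^ n) = n.factorial • D s ^ n := by
  induction n with
  | zero => simp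
  | succ n ih =>
    rw [Function.iterate_succ_apply, leibniz_pow, Nat.add_sub_cancel, smul_eq_mul,
      iterate_map_nsmul, mul_comm, iterate_map_mul_of_map_eq_zero D hs, ih]
    simp only [nsmul_eq_mul, Nat.factorial_succ, Nat.cast_mul, pow_succ]
    ring

theorem exists_iterate_ne_zero_of_iterate_eq_zero {n : ℕ} {b : B} (hb : b ≠ 0)
    (hn : D^[n] b = 0) : ∃ m, D^[m] b ≠ 0 ∧ D^[m + 1] b = 0 := by
  induction n generalizing b with
  | zero => exact absurd hn hb
  | succ n ih =>
    by_cases hDb : D b = 0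
    · exact ⟨0, hb, hDb⟩
    · obtain ⟨m, hm⟩ := ih hDb hn
      exact ⟨m + 1, hm⟩

variable {D}

theorem exists_map_ne_zero_map_map_eq_zero (hD : D.IsLocallyNilpotent)
    (hD0 : D ≠ 0) : ∃ r, D r ≠ 0 ∧ D (D r) = 0 := by
  obtain ⟨b, hb⟩ : ∃ b, D b ≠ 0 := by
    by_contra! h
    exact hD0 (ext h)
  obtain ⟨n, hn⟩ := hD (D b)
  obtain ⟨m, hm⟩ := D.exists_iterate_ne_zero_of_iterate_eq_zero hb hn
  refine ⟨D^[m] b, ?_⟩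
  rw [Function.Commute.self_iterate D m b, Function.Commute.self_iterate D m (D b)]
  simpa only [Function.iterate_succ_apply] using hm

theorem iterate_eq_zero_of_le {k l : ℕ} {b : B} (hk : D^[k] b = 0) (hkl : k ≤ l) :
    D^[l] b = 0 := by
  rw [← Nat.sub_add_cancel hkl, Function.iterate_add_apply, hk, iterate_map_zero]

theorem IsLocallyNilpotent.map_eq_zero_of_map_mul_eq_zero [IsDomain B] [CharZero B]
    (hD : D.IsLocallyNilpotent) {b c : B} (hbc : b * c ≠ 0) (h : D (b * c) = 0) : D b = 0 := by
  obtain ⟨k, hk⟩ := hD b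
  obtain ⟨l, hl⟩ := hD c
  obtain ⟨m, hm, hm'⟩ := D.exists_iterate_ne_zero_of_iterate_eq_zero (left_ne_zero_of_mul hbc) hk
  obtain ⟨n, hn, hn'⟩ := D.exists_iterate_ne_zero_of_iterate_eq_zero (right_ne_zero_of_mul hbc) hl
  have leading : D^[m + n] (b * c) = (m + n).choose m • (D^[m] b * D^[n] c) := by
    rw [iterate_map_mul, sum_eq_single_of_mem (m, n) (mem_antidiagonal.2 rfl)]
    rintro ⟨i, j⟩ hij hne
    rw [HasAntidiagonal.mem_antidiagonal] at hij
    rcases lt_or_ge m i with hi | hi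
    · rw [iterate_eq_zero_of_le hm' hi, zero_mul, smul_zero]
    · have hj : n < j := by
        by_contra!
        exact hne (Prod.ext (by omega) (by omega))
      rw [iterate_eq_zero_of_le hn' hj, mul_zero, smul_zero]
  cases m with
  | zero => simpa using hm'
  | succ m =>
    have : D^[m + 1 + n] (b * c) = 0 := by
      rw [show m + 1 + n = m + n + 1 by omega, Function.iterate_succ_apply, h, iterate_map_zero]
    rw [leading, nsmul_eq_mul] at this
    have hchoose : ((m + 1 + n).choose (m + 1) : B) ≠ 0 :=
      Nat.cast_ne_zero.2 (Nat.choose_pos (by omega)).ne'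
    exact absurd this (mul_ne_zero hchoose (mul_ne_zero hm hn))

theorem IsLocallyNilpotent.mem_of_dvd [IsDomain B] [CharZero B] (hD : D.IsLocallyNilpotent)
    {A : Subring B} (hA : ∀ b, D b = 0 ↔ b ∈ A) {w c : B} (hw : w ∈ A) (hw0 : w ≠ 0)
    (hcw : c ∣ w) : c ∈ A := by
  obtain ⟨d, rfl⟩ := hcw
  exact (hA c).1 (hD.map_eq_zero_of_map_mul_eq_zero hw0 ((hA _).2 hw))

end Derivation

namespace Subring

variable {B : Type*} [CommRing B] {A : Subring B}

theorem comp_eval₂RingHom_eq_evalRingHom_zero {π : B →+* A} (hπ : ∀ a : A, π a = a) {s : B}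
    (hs : π s = 0) : π.comp (eval₂RingHom A.subtype s) = evalRingHom 0 :=
  ringHom_ext (fun a ↦ by simp [hπ]) (by simp [hs])

theorem C_dvd_of_dvd_eval₂ {π : B →+* A} (hπ : ∀ a : A, π a = a) {s : B} (hs : π s = 0)
    {q : A} (hq : (Ideal.span {(q : B)}).IsPrime) (hqs : ¬ (q : B) ∣ s) {p : A[X]}
    (hp : (q : B) ∣ eval₂ A.subtype s p) : C q ∣ p := by
  have hπE (p : A[X]) : π (eval₂ A.subtype s p) = p.eval 0 :=
    RingHom.congr_fun (comp_eval₂RingHom_eq_evalRingHom_zero hπ hs) p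
  induction p using Polynomial.recOnHorner with
  | M0 => exact dvd_zero _
  | MC p a hp0 _ ih =>
    obtain ⟨y, hy⟩ := hp
    rw [eval₂_add, eval₂_C] at hy
    have ha : a = q * π y := by
      simpa [hπE, ← coeff_zero_eq_eval_zero, hp0, hπ] using congrArg π hy
    have hqp : (q : B) ∣ eval₂ A.subtype s p :=
      ⟨y - π y, by rw [mul_sub, ← hy, ha]; simp⟩
    exact dvd_add (ih hqp) ⟨C (π y), by rw [ha, C_mul]⟩
  | MX p _ ih =>
    rw [eval₂_mul_X] at hp
    rw [← Ideal.mem_span_singleton] at hp hqs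
    exact (ih (Ideal.mem_span_singleton.1 ((hq.mem_or_mem hp).resolve_right hqs))).mul_right X

theorem injective_eval₂RingHom [IsDomain B] {π : B →+* A} (hπ : ∀ a : A, π a = a) {s : B}
    (hs : π s = 0) (hs0 : s ≠ 0) : Function.Injective (eval₂RingHom A.subtype s) := by
  refine (injective_iff_map_eq_zero _).2 fun p hp ↦ ?_
  have : C (0 : A) ∣ p := C_dvd_of_dvd_eval₂ hπ hs (by simpa using Ideal.isPrime_bot)
    (by simpa using hs0) (by simpa using hp)
  simpa using this

theorem mem_range_eval₂RingHom {a : B} (ha : a ∈ A) (s : B) :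
    a ∈ (eval₂RingHom A.subtype s).range :=
  ⟨C ⟨a, ha⟩, eval₂_C _ _⟩

theorem self_mem_range_eval₂RingHom (s : B) : s ∈ (eval₂RingHom A.subtype s).range :=
  ⟨X, eval₂_X _ _⟩

end Subring

namespace Derivation

variable {B : Type*} [CommRing B] {D : Derivation ℤ B B} {A : Subring B}

theorem IsLocallyNilpotent.exists_local_slice [IsDomain B] [CharZero B] [WfDvdMonoid B]
    (hD : D.IsLocallyNilpotent) (hD0 : D ≠ 0) (hA : ∀ b, D b = 0 ↔ b ∈ A) {π : B →+* A}
    (hπ : ∀ a : A, π a = a) :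
    ∃ s, π s = 0 ∧ D s ∈ A ∧ D s ≠ 0 ∧ ∀ q, Prime q → q ∣ D s → ¬ q ∣ s := by
  obtain ⟨r, hr, hr'⟩ := exists_map_ne_zero_map_map_eq_zero hD hD0
  let S : Set B := {g | ∃ s, π s = 0 ∧ D s = g ∧ g ∈ A ∧ g ≠ 0}
  have hrS : D r ∈ S := ⟨r - π r, by simp [hπ], by simp [(hA _).2 (π r).2], (hA _).1 hr', hr⟩
  obtain ⟨_, ⟨s, hs, rfl, hsA, hs0⟩, hmin⟩ := wellFounded_dvdNotUnit.has_min S ⟨_, hrS⟩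
  refine ⟨s, hs, hsA, hs0, ?_⟩
  rintro q hq hqDs ⟨u, rfl⟩
  have hqA : q ∈ A := hD.mem_of_dvd hA hsA hs0 hqDs
  have hDs : D (q * u) = q * D u := by simp [(hA q).2 hqA]
  have hu : π u = 0 := by
    rw [map_mul, hπ ⟨q, hqA⟩] at hs
    exact (mul_eq_zero.1 hs).resolve_left fun h ↦ hq.ne_zero (congrArg Subtype.val h)
  have hDuA : D u ∈ A := hD.mem_of_dvd hA hsA hs0 ⟨q, by rw [hDs, mul_comm]⟩
  have hDu0 : D u ≠ 0 := fun h ↦ hs0 (by rw [hDs, h, mul_zero])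
  exact hmin (D u) ⟨u, hu, rfl, hDuA, hDu0⟩ ⟨hDu0, q, hq.not_isUnit, by rw [hDs, mul_comm]⟩

theorem exists_pow_mul_mem_range [Algebra ℚ B] (hA : ∀ b, D b = 0 ↔ b ∈ A) {s : B}
    (hsA : D s ∈ A) {n : ℕ} {b : B} (hb : D^[n] b = 0) :
    ∃ m, D s ^ m * b ∈ (eval₂RingHom A.subtype s).range := by
  induction n generalizing b with
  | zero => exact ⟨0, by simp [show b = 0 from hb]⟩
  | succ n ih =>
    have hn : (n.factorial : ℚ) ≠ 0 := by positivity
    set c := (n.factorial : ℚ)⁻¹ • D^[n] b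
    have hc : n.factorial • c = D^[n] b := by
      rw [← Nat.cast_smul_eq_nsmul ℚ, smul_smul, mul_inv_cancel₀ hn, one_smul]
    have hcA : c ∈ A := by
      refine (hA c).1 ?_
      have : n.factorial • D c = 0 := by
        rw [← map_nsmul, hc, ← Function.iterate_succ_apply' D, hb]
      rwa [← Nat.cast_smul_eq_nsmul ℚ, smul_eq_zero, or_iff_right hn] at this
    obtain ⟨m, hm⟩ := ih (b := D s ^ n * b - c * s ^ n) <| by
      rw [iterate_map_sub, iterate_map_mul_of_map_eq_zero D ((hA _).2 (pow_mem hsA n)),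
        iterate_map_mul_of_map_eq_zero D ((hA c).2 hcA), iterate_map_pow_self D ((hA _).2 hsA),
        ← hc]
      simp only [nsmul_eq_mul]
      ring
    refine ⟨m + n, ?_⟩
    have : D s ^ (m + n) * b = D s ^ m * (D s ^ n * b - c * s ^ n) + D s ^ m * c * s ^ n := by
      ring
    rw [this]
    exact add_mem hm <| mul_mem (mul_mem (pow_mem (Subring.mem_range_eval₂RingHom hsA s) m)
      (Subring.mem_range_eval₂RingHom hcA s)) (pow_mem (Subring.self_mem_range_eval₂RingHom s) n)

theorem IsLocallyNilpotent.mem_range_of_mul_mem_range [IsDomain B] [CharZero B]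
    [UniqueFactorizationMonoid B] (hD : D.IsLocallyNilpotent) (hA : ∀ b, D b = 0 ↔ b ∈ A)
    {π : B →+* A} (hπ : ∀ a : A, π a = a) {s : B} (hs : π s = 0) (hsA : D s ∈ A)
    (hs0 : D s ≠ 0) (hcop : ∀ q, Prime q → q ∣ D s → ¬ q ∣ s) {b : B}
    (hb : D s * b ∈ (eval₂RingHom A.subtype s).range) :
    b ∈ (eval₂RingHom A.subtype s).range := by
  suffices ∀ x, x ∣ D s → ∀ b, x * b ∈ (eval₂RingHom A.subtype s).range →
      b ∈ (eval₂RingHom A.subtype s).range from this _ dvd_rfl b hb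
  intro x
  induction x using UniqueFactorizationMonoid.induction_on_prime with
  | h₁ => exact fun h ↦ absurd (zero_dvd_iff.1 h) hs0
  | h₂ u hu =>
    intro _ b hub
    obtain ⟨v, hv⟩ := hu.exists_left_inv
    have hvA : v ∈ A := hD.mem_of_dvd hA (one_mem A) one_ne_zero ⟨u, hv.symm⟩
    simpa [← mul_assoc, hv] using mul_mem (Subring.mem_range_eval₂RingHom hvA s) hub
  | h₃ x q _ hq ih =>
    intro hqx b ⟨p, hp⟩
    have hqA : q ∈ A := hD.mem_of_dvd hA hsA hs0 (dvd_of_mul_right_dvd hqx)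
    obtain ⟨p', rfl⟩ := Subring.C_dvd_of_dvd_eval₂ hπ hs (q := ⟨q, hqA⟩)
      ((Ideal.span_singleton_prime hq.ne_zero).2 hq) (hcop q hq (dvd_of_mul_right_dvd hqx))
      ⟨x * b, by rw [← mul_assoc]; exact hp⟩
    refine ih (dvd_of_mul_left_dvd hqx) b ⟨p', mul_left_cancel₀ hq.ne_zero ?_⟩
    simpa [mul_assoc] using hp

theorem IsLocallyNilpotent.surjective_eval₂RingHom [IsDomain B] [Algebra ℚ B]
    [UniqueFactorizationMonoid B] (hD : D.IsLocallyNilpotent) (hA : ∀ b, D b = 0 ↔ b ∈ A)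
    {π : B →+* A} (hπ : ∀ a : A, π a = a) {s : B} (hs : π s = 0) (hsA : D s ∈ A)
    (hs0 : D s ≠ 0) (hcop : ∀ q, Prime q → q ∣ D s → ¬ q ∣ s) :
    Function.Surjective (eval₂RingHom A.subtype s) := by
  have := charZero_of_injective_algebraMap (algebraMap ℚ B).injective
  intro b
  obtain ⟨n, hn⟩ := hD b
  obtain ⟨m, hm⟩ := exists_pow_mul_mem_range hA hsA hn
  clear hn
  induction m generalizing b with
  | zero => simpa using hm
  | succ m ih =>
    exact hD.mem_range_of_mul_mem_range hA hπ hs hsA hs0 hcop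
      (ih (D s * b) (by rwa [← mul_assoc, ← pow_succ]))

end Derivation

namespace Polynomial

variable {A B : Type*} [CommRing A] [CommRing B] (e : A[X] ≃+* B)

noncomputable def derivationOfRingEquiv : Derivation ℤ B B :=
  Derivation.mk' ((e : A[X] →+* B).toAddMonoidHom.comp <| derivative.toAddMonoidHom.comp
    (e.symm : B →+* A[X]).toAddMonoidHom).toIntLinearMap fun a b ↦ by
    simp [derivative_mul]
    ring

theorem derivationOfRingEquiv_apply (b : B) :
    derivationOfRingEquiv e b = e (derivative (e.symm b)) :=
  rfl

theorem iterate_derivationOfRingEquiv_apply (n : ℕ) (b : B) :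
    (derivationOfRingEquiv e)^[n] b = e (derivative^[n] (e.symm b)) := by
  induction n generalizing b with
  | zero => simp
  | succ n ih =>
    rw [Function.iterate_succ_apply, ih, derivationOfRingEquiv_apply, e.symm_apply_apply,
      Function.iterate_succ_apply]

theorem isLocallyNilpotent_derivationOfRingEquiv :
    (derivationOfRingEquiv e).IsLocallyNilpotent := fun b ↦
  ⟨(e.symm b).natDegree + 1, by
    rw [iterate_derivationOfRingEquiv_apply, iterate_derivative_eq_zero (Nat.lt_succ_self _),
      map_zero]⟩

theorem derivationOfRingEquiv_ne_zero [Nontrivial B] : derivationOfRingEquiv e ≠ 0 := by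
  intro h
  simpa [derivationOfRingEquiv_apply] using congrArg (· (e X)) h

theorem derivationOfRingEquiv_eq_zero_iff [IsAddTorsionFree A] {b : B} :
    derivationOfRingEquiv e b = 0 ↔ ∃ a, e (C a) = b := by
  rw [derivationOfRingEquiv_apply, map_eq_zero_iff e e.injective]
  constructor
  · intro h
    exact ⟨_, by rw [← eq_C_of_derivative_eq_zero h, e.apply_symm_apply]⟩
  · rintro ⟨a, rfl⟩
    simp

end Polynomial

/-- Let `B` be a UFD containing `ℚ` and `A` a subring of `B`.  Then `A` is a
retract of `B` and `A = Ker D` for some nonzero locally nilpotent derivation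
`D` of `B` if and only if `B` is a polynomial ring in one variable over `A`. -/
theorem ufd_retract_lnd_iff_polynomial {B : Type*} [CommRing B] [IsDomain B]
    [UniqueFactorizationMonoid B] [Algebra ℚ B] (A : Subring B) :
    ((∃ π : B →+* A, ∀ a : A, π (a : B) = a) ∧
      ∃ D : Derivation ℤ B B, D ≠ 0 ∧ (∀ b : B, ∃ n : ℕ, (⇑D)^[n] b = 0) ∧
        ∀ b : B, (D b = 0 ↔ b ∈ A)) ↔
    ∃ x : B, Function.Bijective (Polynomial.eval₂RingHom (A.subtype : A →+* B) x) := by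
  have := charZero_of_injective_algebraMap (algebraMap ℚ B).injective
  constructor
  · rintro ⟨⟨π, hπ⟩, D, hD0, hD : D.IsLocallyNilpotent, hA⟩
    obtain ⟨s, hs, hsA, hs0, hcop⟩ := hD.exists_local_slice hD0 hA hπ
    exact ⟨s, Subring.injective_eval₂RingHom hπ hs (by rintro rfl; simp at hs0),
      hD.surjective_eval₂RingHom hA hπ hs hsA hs0 hcop⟩
  · rintro ⟨x, hx⟩
    let e := RingEquiv.ofBijective _ hx
    have he (a : A) : e (C a) = a := by simp [e]
    refine ⟨⟨(evalRingHom 0).comp (e.symm : B →+* A[X]), fun a ↦ ?_⟩,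
      derivationOfRingEquiv e, derivationOfRingEquiv_ne_zero e,
      isLocallyNilpotent_derivationOfRingEquiv e, fun b ↦ ?_⟩
    · simp [e.symm_apply_eq.2 (he a).symm]
    · simp [derivationOfRingEquiv_eq_zero_iff, he]
end

section
/- Let B be an integral domain satisfying the ascending chain condition on principal ideals, p a prime element of B, A a retract of B with retraction π: B → A. If π(p) is not a unit in A and pB ∩ A ≠ (0), then pB ∩ A = π(p)A and π(p) is a prime element of A. -/
/-!
Applying `π` to `x = p * y` with `x ∈ A` gives `x = π(p) π(y)`, so `pB ∩ A ⊆ π(p)A`. The point is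
that `p ∣ π(p)` in `B`: otherwise `p ∣ π(y)`, say `π(y) = p z`, and cancelling `p` in
`p y = π(p) p z` gives `y = π(p) z` with `p z = π(y)` again a nonzero element of `pB ∩ A`.
Iterating produces an infinite chain of proper divisors, contradicting ACCP. Once `p ∣ π(p)`,
the two ideals agree, and `π(p)A` is the contraction of the prime ideal `pB`.
-/

theorem WfDvdMonoid.of_span_singleton_chain_stabilizes {R : Type*} [CommRing R] [IsDomain R]
    (hacc : ∀ f : ℕ → R, (∀ n, Ideal.span {f n} ≤ Ideal.span {f (n + 1)}) →
      ∃ N, ∀ n, N ≤ n → Ideal.span {f n} = Ideal.span {f N}) :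
    WfDvdMonoid R := by
  refine ⟨wellFounded_iff_isEmpty_descending_chain.mpr ⟨fun ⟨f, hf⟩ => ?_⟩⟩
  have hlt : ∀ n, Ideal.span {f n} < Ideal.span {f (n + 1)} := fun n =>
    Ideal.span_singleton_lt_span_singleton.mpr (hf n)
  obtain ⟨N, hN⟩ := hacc f fun n => (hlt n).le
  exact (hlt N).ne (hN (N + 1) N.le_succ).symm

section Retraction

variable {B : Type*} [CommRing B] {A : Subring B} {π : B →+* A}

theorem retraction_eq_mul_of_coe_eq_mul (hπ : ∀ a : A, π (a : B) = a) {x : A} {b y : B}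
    (h : (x : B) = b * y) : x = π b * π y := by
  rw [← hπ x, h, map_mul]

theorem isUnit_of_isUnit_coe (hπ : ∀ a : A, π (a : B) = a) {a : A} (h : IsUnit (a : B)) :
    IsUnit a :=
  hπ a ▸ h.map π

theorem Prime.dvd_coe_retraction [IsDomain B] [WfDvdMonoid B] (hπ : ∀ a : A, π (a : B) = a)
    {p : B} (hp : Prime p) (hunit : ¬ IsUnit (π p))
    (hne : ∃ a : A, (a : B) ∈ Ideal.span {p} ∧ a ≠ 0) :
    p ∣ (π p : B) := by
  by_contra hndvd
  let S : Set B := {y | ∃ x : A, x ≠ 0 ∧ (x : B) = p * y}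
  have hS : S.Nonempty := by
    obtain ⟨a, ha, ha0⟩ := hne
    obtain ⟨y, hy⟩ := Ideal.mem_span_singleton.mp ha
    exact ⟨y, a, ha0, hy⟩
  obtain ⟨y, ⟨x, hx0, hxy⟩, hmin⟩ := wellFounded_dvdNotUnit.has_min S hS
  have hx : x = π p * π y := retraction_eq_mul_of_coe_eq_mul hπ hxy
  have hπy0 : π y ≠ 0 := by
    intro h
    exact hx0 (by rw [hx, h, mul_zero])
  obtain ⟨z, hz⟩ : p ∣ (π y : B) :=
    (hp.dvd_or_dvd ⟨y, by rw [← hxy, hx, Subring.coe_mul]⟩).resolve_left hndvd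
  have hyz : y = z * π p :=
    mul_left_cancel₀ hp.ne_zero (by rw [← hxy, hx, Subring.coe_mul, hz]; ring)
  have hz0 : z ≠ 0 := by
    rintro rfl
    exact hπy0 (Subtype.ext (by rw [hz, mul_zero, ZeroMemClass.coe_zero]))
  exact hmin z ⟨π y, hπy0, hz⟩ ⟨hz0, π p, fun h => hunit (isUnit_of_isUnit_coe hπ h), hyz⟩

theorem coe_mem_span_singleton_iff_mem_span_retraction (hπ : ∀ a : A, π (a : B) = a) {p : B}
    (hdvd : p ∣ (π p : B)) (a : A) :
    (a : B) ∈ Ideal.span {p} ↔ a ∈ Ideal.span {π p} := by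
  simp only [Ideal.mem_span_singleton]
  constructor
  · rintro ⟨y, hy⟩
    exact ⟨π y, retraction_eq_mul_of_coe_eq_mul hπ hy⟩
  · rintro ⟨c, rfl⟩
    exact hdvd.mul_right (c : B)

theorem Prime.retraction_of_dvd_coe (hπ : ∀ a : A, π (a : B) = a) {p : B} (hp : Prime p)
    (hdvd : p ∣ (π p : B)) (hne : ∃ a : A, (a : B) ∈ Ideal.span {p} ∧ a ≠ 0) :
    Prime (π p) := by
  have hcomap : Ideal.comap A.subtype (Ideal.span {p}) = Ideal.span {π p} :=
    Ideal.ext (coe_mem_span_singleton_iff_mem_span_retraction hπ hdvd)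
  have hπp0 : π p ≠ 0 := by
    obtain ⟨a, ha, ha0⟩ := hne
    intro h
    rw [coe_mem_span_singleton_iff_mem_span_retraction hπ hdvd, h, Ideal.mem_span_singleton,
      zero_dvd_iff] at ha
    exact ha0 ha
  have : (Ideal.span {p}).IsPrime := (Ideal.span_singleton_prime hp.ne_zero).mpr hp
  rw [← Ideal.span_singleton_prime hπp0, ← hcomap]
  exact Ideal.IsPrime.comap _

end Retraction

/-- Let `B` be a domain with ACC on principal ideals, `p` a prime element of
`B`, and `A` a retract of `B` via `π`.  If `π p` is not a unit in `A` and
`pB ∩ A ≠ (0)`, then `pB ∩ A = π(p)A` and `π p` is a prime element of `A`. -/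
theorem retract_prime_element {B : Type*} [CommRing B] [IsDomain B]
    (hacc : ∀ f : ℕ → B, (∀ n, Ideal.span {f n} ≤ Ideal.span {f (n + 1)}) →
      ∃ N, ∀ n, N ≤ n → Ideal.span {f n} = Ideal.span {f N})
    (A : Subring B) (π : B →+* A) (hπ : ∀ a : A, π (a : B) = a)
    (p : B) (hp : Prime p) (hunit : ¬ IsUnit (π p))
    (hne : ∃ a : A, (a : B) ∈ Ideal.span {p} ∧ a ≠ 0) :
    (∀ a : A, (a : B) ∈ Ideal.span {p} ↔ a ∈ Ideal.span {π p}) ∧ Prime (π p) := by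
  have : WfDvdMonoid B := .of_span_singleton_chain_stabilizes hacc
  have hdvd : p ∣ (π p : B) := hp.dvd_coe_retraction hπ hunit hne
  exact ⟨coe_mem_span_singleton_iff_mem_span_retraction hπ hdvd,
    hp.retraction_of_dvd_coe hπ hdvd hne⟩
end
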